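/- arXiv:1203.6103 — 7 statements merged into one kernel-verified Lean document; each statement's English description precedes it below -/
import Mathlib

section
/- The number of alternating bridges of length 2k (lattice paths from (0,0) to (2k,0) using steps (1,1), (1,0), (1,-1), where no odd-indexed step goes up and no even-indexed step goes down) having exactly 2i inclined (non-horizontal) steps is (k choose i)^2. -/
open scoped Classical

/-- The value of an encoded step: `0 ↦ -1` (down), `1 ↦ 0` (horizontal), `2 ↦ 1` (up). -/
def stepVal (j : Fin 3) : ℤ := (j : ℤ) - 1

/-- `s` encodes an alternating bridge of length `2k`: a lattice path from `(0,0)` to `(2k,0)`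
with steps `(1,1)`, `(1,0)`, `(1,-1)` (so the vertical displacements sum to `0`), where no
odd-numbered step goes up and no even-numbered step goes down.  Step number `i+1` corresponds
to index `i : Fin (2*k)`. -/
def IsAltBridge {k : ℕ} (s : Fin (2 * k) → Fin 3) : Prop :=
  (∑ i, stepVal (s i)) = 0 ∧
  (∀ i : Fin (2 * k), (i : ℕ) % 2 = 0 → stepVal (s i) ≠ 1) ∧
  (∀ i : Fin (2 * k), (i : ℕ) % 2 = 1 → stepVal (s i) ≠ -1)

/-!
An alternating bridge is determined by its set `S` of inclined steps: an inclined step with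
even index goes down and one with odd index goes up. The path returns to height `0` iff `S`
has as many even as odd indices, so a bridge with `2i` inclined steps amounts to a choice of
`i` of the `k` even indices and `i` of the `k` odd ones.
-/

open Finset

theorem Finset.card_filter_card_filter_not_eq_choose_mul_choose {α : Type*} [Fintype α]
    (p : α → Prop) [DecidablePred p] (a b : ℕ) :
    #{S : Finset α | #{x ∈ S | p x} = a ∧ #{x ∈ S | ¬p x} = b} =
      (#{x | p x}).choose a * (#{x | ¬p x}).choose b := by
  classical
  rw [← card_powersetCard, ← card_powersetCard, ← card_product]
  have filter_union_of_subset {A B : Finset α} (hA : A ⊆ univ.filter p)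
      (hB : B ⊆ univ.filter (¬p ·)) : {x ∈ A ∪ B | p x} = A ∧ {x ∈ A ∪ B | ¬p x} = B := by
    simp only [subset_iff, mem_filter_univ] at hA hB
    rw [filter_union, filter_union, filter_true_of_mem hA, filter_false_of_mem hB,
      filter_false_of_mem (fun x hx => not_not.2 (hA hx)), filter_true_of_mem hB,
      union_empty, empty_union]
    exact ⟨rfl, rfl⟩
  refine card_nbij' (fun S => ({x ∈ S | p x}, {x ∈ S | ¬p x})) (fun AB => AB.1 ∪ AB.2)
    ?_ ?_ ?_ ?_
  · intro S hS
    simp only [coe_filter, Set.mem_ofPred_eq, mem_univ, true_and] at hS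
    simp [mem_powersetCard, hS, filter_subset_filter]
  · rintro ⟨A, B⟩ h
    simp only [coe_product, Set.mem_prod, mem_coe, mem_powersetCard] at h
    simp [filter_union_of_subset h.1.1 h.2.1, h.1.2, h.2.2]
  · intro S _
    exact filter_union_filter_not_eq _ _
  · rintro ⟨A, B⟩ h
    simp only [coe_product, Set.mem_prod, mem_coe, mem_powersetCard] at h
    simp [filter_union_of_subset h.1.1 h.2.1]

theorem Fin.card_filter_two_mul_even (k : ℕ) : #{j : Fin (2 * k) | (j : ℕ) % 2 = 0} = k := by
  conv_rhs => rw [← Finset.card_fin k]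
  refine card_nbij' (fun j => ⟨j / 2, by omega⟩) (fun a => ⟨2 * a, by omega⟩) ?_ ?_ ?_ ?_
  · simp
  · simp
  · intro j hj
    simp only [coe_filter, mem_univ, true_and, Set.mem_ofPred_eq] at hj
    simp only [Fin.ext_iff]
    omega
  · intro a _
    simp

theorem Fin.card_filter_two_mul_odd (k : ℕ) : #{j : Fin (2 * k) | ¬(j : ℕ) % 2 = 0} = k := by
  have := card_filter_add_card_filter_not (s := univ) (fun j : Fin (2 * k) => (j : ℕ) % 2 = 0)
  rw [Fin.card_filter_two_mul_even, card_univ, Fintype.card_fin] at this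
  omega

section
variable {n : ℕ}

def IsAlternating (s : Fin n → Fin 3) : Prop :=
  (∀ j : Fin n, (j : ℕ) % 2 = 0 → stepVal (s j) ≠ 1) ∧
  (∀ j : Fin n, (j : ℕ) % 2 = 1 → stepVal (s j) ≠ -1)

def inclinedSteps (s : Fin n → Fin 3) : Finset (Fin n) := {j | stepVal (s j) ≠ 0}

def pathOfInclinedSteps (S : Finset (Fin n)) (j : Fin n) : Fin 3 :=
  if j ∈ S then (if (j : ℕ) % 2 = 0 then 0 else 2) else 1

lemma stepVal_pathOfInclinedSteps (S : Finset (Fin n)) (j : Fin n) :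
    stepVal (pathOfInclinedSteps S j) =
      if j ∈ S then (if (j : ℕ) % 2 = 0 then -1 else 1) else 0 := by
  unfold pathOfInclinedSteps
  split_ifs <;> rfl

lemma isAlternating_pathOfInclinedSteps (S : Finset (Fin n)) :
    IsAlternating (pathOfInclinedSteps S) := by
  constructor <;> intro j hj <;> rw [stepVal_pathOfInclinedSteps] <;> split_ifs <;> omega

lemma inclinedSteps_pathOfInclinedSteps (S : Finset (Fin n)) :
    inclinedSteps (pathOfInclinedSteps S) = S := by
  ext j
  simp only [inclinedSteps, mem_filter_univ, stepVal_pathOfInclinedSteps]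
  split_ifs <;> simpa

lemma IsAlternating.pathOfInclinedSteps_inclinedSteps {s : Fin n → Fin 3}
    (hs : IsAlternating s) : pathOfInclinedSteps (inclinedSteps s) = s := by
  funext j
  have hup := hs.1 j
  have hdown := hs.2 j
  simp only [pathOfInclinedSteps, inclinedSteps, mem_filter_univ]
  generalize s j = x at hup hdown
  fin_cases x <;> simp [stepVal] at * <;> omega

lemma sum_stepVal_pathOfInclinedSteps (S : Finset (Fin n)) :
    ∑ j, stepVal (pathOfInclinedSteps S j) =
      (#{j ∈ S | ¬j.val % 2 = 0} : ℤ) - #{j ∈ S | j.val % 2 = 0} := by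
  simp only [stepVal_pathOfInclinedSteps, sum_ite_mem, univ_inter, sum_ite, sum_const, smul_neg,
    nsmul_eq_mul, mul_one]
  ring

end

lemma isAltBridge_pathOfInclinedSteps_and_card_iff {k : ℕ} (S : Finset (Fin (2 * k))) (i : ℕ) :
    IsAltBridge (pathOfInclinedSteps S) ∧
        #(inclinedSteps (pathOfInclinedSteps S)) = 2 * i ↔
      #{j ∈ S | j.val % 2 = 0} = i ∧ #{j ∈ S | ¬j.val % 2 = 0} = i := by
  have hsplit := card_filter_add_card_filter_not (s := S) (fun j => j.val % 2 = 0)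
  rw [IsAltBridge, sum_stepVal_pathOfInclinedSteps, inclinedSteps_pathOfInclinedSteps]
  exact ⟨fun ⟨⟨hsum, _⟩, hcard⟩ => by omega,
    fun ⟨heven, hodd⟩ => ⟨⟨by omega, isAlternating_pathOfInclinedSteps S⟩, by omega⟩⟩

/-- The number of alternating bridges of length `2k` having exactly `2i` inclined
(non-horizontal) steps is `(k choose i)^2`. -/
theorem altBridge_card_inclined (k i : ℕ) :
    (Finset.univ.filter (fun s : Fin (2 * k) → Fin 3 =>
      IsAltBridge s ∧
        (Finset.univ.filter (fun j : Fin (2 * k) => stepVal (s j) ≠ 0)).card = 2 * i)).card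
      = (k.choose i) ^ 2 := by
  calc _ = #{S : Finset (Fin (2 * k)) |
          #{j ∈ S | j.val % 2 = 0} = i ∧ #{j ∈ S | ¬j.val % 2 = 0} = i} := by
        refine card_nbij' inclinedSteps pathOfInclinedSteps ?_ ?_ ?_ ?_
        · intro s hs
          simp only [coe_filter, mem_univ, true_and, Set.mem_ofPred_eq] at hs ⊢
          obtain ⟨S, rfl⟩ : ∃ S, pathOfInclinedSteps S = s :=
            ⟨_, IsAlternating.pathOfInclinedSteps_inclinedSteps hs.1.2⟩
          rw [inclinedSteps_pathOfInclinedSteps]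
          exact (isAltBridge_pathOfInclinedSteps_and_card_iff S i).1 hs
        · intro S hS
          simp only [coe_filter, mem_univ, true_and, Set.mem_ofPred_eq] at hS ⊢
          exact (isAltBridge_pathOfInclinedSteps_and_card_iff S i).2 hS
        · intro s hs
          simp only [coe_filter, mem_univ, true_and, Set.mem_ofPred_eq] at hs
          exact IsAlternating.pathOfInclinedSteps_inclinedSteps hs.1.2
        · intro S _
          exact inclinedSteps_pathOfInclinedSteps S
    _ = (k.choose i) ^ 2 := by
      rw [card_filter_card_filter_not_eq_choose_mul_choose, Fin.card_filter_two_mul_even,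
        Fin.card_filter_two_mul_odd, sq]
end

section
/- For every alternating bridge w that stays between heights 1 and n, and for every height m, the number of steps of w crossing between heights m and m+1 (in either direction) is even, and the number of horizontal steps of w at height m is even. -/
open scoped Classical

lemma even_card_of_telescope {N : ℕ} (p : ℕ → Prop) [DecidablePred p]
    (F : ℕ → ZMod 2)
    (hF : ∀ i < N, (if p i then (1 : ZMod 2) else 0) = F (i+1) - F i)
    (hends : F N = F 0) :
    Even ((Finset.range N).filter p).card := by
  have key : ((((Finset.range N).filter p).card : ℕ) : ZMod 2) = 0 := by
    rw [Finset.card_filter]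
    push_cast
    have : ∑ i ∈ Finset.range N, (if p i then (1 : ZMod 2) else 0)
        = ∑ i ∈ Finset.range N, (F (i+1) - F i) :=
      Finset.sum_congr rfl (fun i hi => hF i (Finset.mem_range.mp hi))
    rw [this, Finset.sum_range_sub, hends, sub_self]
  exact even_iff_two_dvd.mpr ((ZMod.natCast_eq_zero_iff _ 2).mp key)

/-- For every alternating bridge (steps `s i ∈ {-1,0,1}` for `i < 2k`, summing to `0`,
no odd-numbered step up, no even-numbered step down) which, started at height `h₀`,
stays between heights `1` and `n`, and for every height `m`: the number of steps crossing
between heights `m` and `m+1` (in either direction) is even, and the number of horizontal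
steps at height `m` is even.  Here the height before step `i+1` is
`h₀ + ∑_{j<i} s j`. -/
theorem altBridge_even_crossings (k n : ℕ) (h₀ : ℤ) (s : ℕ → ℤ)
    (hsteps : ∀ i < 2 * k, s i = -1 ∨ s i = 0 ∨ s i = 1)
    (hodd : ∀ i < 2 * k, i % 2 = 0 → s i ≠ 1)
    (heven : ∀ i < 2 * k, i % 2 = 1 → s i ≠ -1)
    (hbridge : ∑ i ∈ Finset.range (2 * k), s i = 0)
    (hbounds : ∀ j ≤ 2 * k,
      1 ≤ h₀ + ∑ i ∈ Finset.range j, s i ∧ h₀ + ∑ i ∈ Finset.range j, s i ≤ (n : ℤ))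
    (m : ℤ) :
    Even ((Finset.range (2 * k)).filter (fun i =>
        (h₀ + ∑ j ∈ Finset.range i, s j = m ∧ s i = 1) ∨
        (h₀ + ∑ j ∈ Finset.range i, s j = m + 1 ∧ s i = -1))).card ∧
    Even ((Finset.range (2 * k)).filter (fun i =>
        h₀ + ∑ j ∈ Finset.range i, s j = m ∧ s i = 0)).card := by
  clear hbounds
  set H : ℕ → ℤ := fun i => h₀ + ∑ j ∈ Finset.range i, s j with hH
  have hstep : ∀ i, H (i + 1) = H i + s i := by
    intro i
    simp only [hH, Finset.sum_range_succ]
    ring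
  have hend : H (2 * k) = H 0 := by
    simp [hH, hbridge]
  constructor
  · rw [← Finset.filter_congr_decidable]
    apply even_card_of_telescope
      (F := fun i => if m + 1 ≤ H i then (1 : ZMod 2) else 0)
    · intro i hi
      rw [hstep i]
      simp only [hH]
      rcases hsteps i hi with h1 | h1 | h1 <;> rw [h1] <;> norm_num <;>
        split_ifs <;> first | rfl | decide | (exfalso; omega)
    · rw [hend]
  · rw [← Finset.filter_congr_decidable]
    apply even_card_of_telescope
      (F := fun i => if i % 2 = 0 then (if m + 1 ≤ H i then (1 : ZMod 2) else 0)
        else (if m ≤ H i then (1 : ZMod 2) else 0))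
    · intro i hi
      rw [hstep i]
      simp only [hH]
      rcases Nat.mod_two_eq_zero_or_one i with hp | hp
      · have hp' : (i + 1) % 2 = 1 := by omega
        have hs1 := hodd i hi hp
        rw [hp, hp']
        rcases hsteps i hi with h1 | h1 | h1 <;> first | (exact absurd h1 hs1) | (
          rw [h1] <;> norm_num <;>
          split_ifs <;> first | rfl | decide | (exfalso; omega))
      · have hp' : (i + 1) % 2 = 0 := by omega
        have hs1 := heven i hi hp
        rw [hp, hp']
        rcases hsteps i hi with h1 | h1 | h1 <;> first | (exact absurd h1 hs1) | (
          rw [h1] <;> norm_num <;>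
          split_ifs <;> first | rfl | decide | (exfalso; omega))
    · rw [hend]
      simp [Nat.mul_mod_right]
end

section
/- Define the weight polynomial p_k(x,y) = sum over alternating bridges w of length 2k of x^{h(w)} y^{2k - h(w)}, where h(w) is the number of horizontal steps. Then p_k(x,y) = sum_{l=0}^{k} (k choose l)^2 x^{2l} y^{2(k-l)}. -/
/-!
Split the `2k` steps into `k` consecutive pairs. In an alternating bridge the first step of each
pair is down or horizontal and the second one is horizontal or up, so the bridge is determined by
the sets `A, B ⊆ {0, …, k-1}` of pairs whose first, resp. second, step is horizontal. The path
returns to height `0` iff it has as many down as up steps, i.e. iff `#A = #B`, and then it has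
`#A + #B = 2 #A` horizontal steps. There are `(k choose l)^2` such pairs with `#A = l`.
-/

open scoped Classical

/-- The number of horizontal steps of an encoded path. -/
def numHoriz {k : ℕ} (s : Fin (2 * k) → Fin 3) : ℕ :=
  (Finset.univ.filter (fun j : Fin (2 * k) => stepVal (s j) = 0)).card

open Finset

theorem Finset.sum_filter_card_fst_eq_card_snd {α M : Type*} [Fintype α] [AddCommMonoid M]
    (f : ℕ → M) :
    ∑ p ∈ univ.filter (fun p : Finset α × Finset α => #p.1 = #p.2), f #p.1
      = ∑ l ∈ range (Fintype.card α + 1), ((Fintype.card α).choose l ^ 2) • f l := by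
  have inner (A : Finset α) :
      ∑ B : Finset α, (if #A = #B then f #A else 0) = (Fintype.card α).choose #A • f #A := by
    rw [← powerset_univ, sum_powerset_apply_card (fun m => if #A = m then f #A else 0),
      card_univ]
    simp [Nat.lt_succ_of_le (card_le_univ A)]
  rw [sum_filter, Fintype.sum_prod_type]
  simp only [inner]
  rw [← powerset_univ, sum_powerset_apply_card (fun m => (Fintype.card α).choose m • f m),
    card_univ]
  simp [sq, mul_smul]

namespace AltBridge

variable {k : ℕ}

def pairIdx : Fin k × Fin 2 ≃ Fin (2 * k) :=
  finProdFinEquiv.trans (finCongr (Nat.mul_comm k 2))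

theorem pairIdx_val (p : Fin k × Fin 2) : (pairIdx p : ℕ) = 2 * p.1 + p.2 := by
  simp [pairIdx, finProdFinEquiv]
  ring

theorem forall_mod_two_iff {P : Fin (2 * k) → Prop} (b : Fin 2) :
    (∀ i : Fin (2 * k), (i : ℕ) % 2 = b → P i) ↔ ∀ j, P (pairIdx (j, b)) := by
  refine ⟨fun h j => h _ (by simp [pairIdx_val, Nat.mod_eq_of_lt b.2]), fun h i hi => ?_⟩
  obtain ⟨⟨j, c⟩, rfl⟩ := pairIdx.surjective i
  obtain rfl : c = b := by ext; simpa [pairIdx_val, Nat.mod_eq_of_lt c.2] using hi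
  exact h j

theorem sum_pairIdx {M : Type*} [AddCommMonoid M] (f : Fin (2 * k) → M) :
    ∑ i, f i = ∑ j, (f (pairIdx (j, 0)) + f (pairIdx (j, 1))) := by
  rw [← pairIdx.sum_comp, Fintype.sum_prod_type]
  simp [Fin.sum_univ_two]

theorem isAltBridge_iff (s : Fin (2 * k) → Fin 3) :
    IsAltBridge s ↔ ∑ i, stepVal (s i) = 0 ∧ (∀ j, s (pairIdx (j, 0)) ≠ 2) ∧
      ∀ j, s (pairIdx (j, 1)) ≠ 0 := by
  have h2 (v : Fin 3) : stepVal v ≠ 1 ↔ v ≠ 2 := by revert v; decide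
  have h0 (v : Fin 3) : stepVal v ≠ -1 ↔ v ≠ 0 := by revert v; decide
  simp only [IsAltBridge, h2, h0]
  have heven := forall_mod_two_iff (P := fun i => s i ≠ 2) 0
  have hodd := forall_mod_two_iff (P := fun i => s i ≠ 0) 1
  simp only [Fin.val_zero, Fin.val_one] at heven hodd
  rw [heven, hodd]

/-- In the `j`-th pair of steps, `p.1` records whether the first step is horizontal rather than
down, `p.2` whether the second one is horizontal rather than up. -/
def ofPair (p : Finset (Fin k) × Finset (Fin k)) (i : Fin (2 * k)) : Fin 3 :=
  let j := (pairIdx.symm i).1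
  if (pairIdx.symm i).2 = 0 then (if j ∈ p.1 then 1 else 0) else (if j ∈ p.2 then 1 else 2)

def toPair (s : Fin (2 * k) → Fin 3) : Finset (Fin k) × Finset (Fin k) :=
  (univ.filter fun j => s (pairIdx (j, 0)) = 1, univ.filter fun j => s (pairIdx (j, 1)) = 1)

section ofPair

variable (p : Finset (Fin k) × Finset (Fin k)) (j : Fin k)

@[simp]
theorem ofPair_pairIdx_zero : ofPair p (pairIdx (j, 0)) = if j ∈ p.1 then 1 else 0 := by
  simp [ofPair]

@[simp]
theorem ofPair_pairIdx_one : ofPair p (pairIdx (j, 1)) = if j ∈ p.2 then 1 else 2 := by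
  simp [ofPair]

theorem toPair_ofPair : toPair (ofPair p) = p := by
  ext <;> simp [toPair]

theorem isAltBridge_ofPair_iff : IsAltBridge (ofPair p) ↔ #p.1 = #p.2 := by
  have hpair (j : Fin k) :
      stepVal (ofPair p (pairIdx (j, 0))) + stepVal (ofPair p (pairIdx (j, 1))) =
        (if j ∈ p.1 then 1 else 0) - (if j ∈ p.2 then 1 else 0) := by
    simp only [ofPair_pairIdx_zero, ofPair_pairIdx_one]
    split_ifs <;> rfl
  have hsteps :
      (∀ j, ofPair p (pairIdx (j, 0)) ≠ 2) ∧ ∀ j, ofPair p (pairIdx (j, 1)) ≠ 0 := by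
    constructor <;> intro j <;> simp only [ofPair_pairIdx_zero, ofPair_pairIdx_one] <;>
      split_ifs <;> decide
  rw [isAltBridge_iff, and_iff_left hsteps, sum_pairIdx]
  simp only [hpair, sum_sub_distrib, sum_boole]
  simp [sub_eq_zero]

theorem numHoriz_ofPair : numHoriz (ofPair p) = #p.1 + #p.2 := by
  have hpair (j : Fin k) :
      (if stepVal (ofPair p (pairIdx (j, 0))) = 0 then 1 else 0) +
        (if stepVal (ofPair p (pairIdx (j, 1))) = 0 then 1 else 0) =
      (if j ∈ p.1 then 1 else 0) + (if j ∈ p.2 then 1 else 0) := by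
    by_cases j ∈ p.1 <;> by_cases j ∈ p.2 <;> simp [*, stepVal]
  rw [numHoriz, card_filter, sum_pairIdx]
  simp only [hpair, sum_add_distrib, sum_boole]
  simp

end ofPair

theorem ofPair_toPair {s : Fin (2 * k) → Fin 3} (hs : IsAltBridge s) : ofPair (toPair s) = s := by
  obtain ⟨-, heven, hodd⟩ := (isAltBridge_iff s).1 hs
  have h0 (v : Fin 3) (hv : v ≠ 2) : (if v = 1 then 1 else 0) = v := by revert v; decide
  have h1 (v : Fin 3) (hv : v ≠ 0) : (if v = 1 then 1 else 2) = v := by revert v; decide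
  funext i
  obtain ⟨⟨j, b⟩, rfl⟩ := pairIdx.surjective i
  fin_cases b
  · simpa [toPair] using h0 _ (heven j)
  · simpa [toPair] using h1 _ (hodd j)

theorem sum_isAltBridge_eq_sum_ofPair {M : Type*} [AddCommMonoid M]
    (f : (Fin (2 * k) → Fin 3) → M) :
    ∑ s ∈ univ.filter IsAltBridge, f s
      = ∑ p ∈ univ.filter (fun p : Finset (Fin k) × Finset (Fin k) => #p.1 = #p.2),
          f (ofPair p) := by
  refine sum_nbij' toPair ofPair (fun s hs => ?_) (fun p hp => ?_)
    (fun s hs => ofPair_toPair (mem_filter.1 hs).2) (fun p _ => toPair_ofPair p)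
    (fun s hs => by rw [ofPair_toPair (mem_filter.1 hs).2])
  · simp only [mem_filter, mem_univ, true_and] at hs ⊢
    rwa [← isAltBridge_ofPair_iff, ofPair_toPair hs]
  · simp only [mem_filter, mem_univ, true_and] at hp ⊢
    exact (isAltBridge_ofPair_iff p).2 hp

end AltBridge

/-- The weight polynomial `p_k(x,y) = ∑_{bridges w} x^{h(w)} y^{2k-h(w)}` equals
`∑_{l=0}^{k} (k choose l)^2 x^{2l} y^{2(k-l)}`. -/
theorem altBridge_weight_polynomial (k : ℕ) (x y : ℝ) :
    ∑ s ∈ Finset.univ.filter (fun s : Fin (2 * k) → Fin 3 => IsAltBridge s),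
        x ^ numHoriz s * y ^ (2 * k - numHoriz s)
      = ∑ l ∈ Finset.range (k + 1),
          (k.choose l : ℝ) ^ 2 * x ^ (2 * l) * y ^ (2 * (k - l)) := by
  rw [AltBridge.sum_isAltBridge_eq_sum_ofPair]
  calc _ = ∑ p ∈ univ.filter (fun p : Finset (Fin k) × Finset (Fin k) => #p.1 = #p.2),
        x ^ (2 * #p.1) * y ^ (2 * (k - #p.1)) := by
        refine sum_congr rfl fun p hp => ?_
        rw [AltBridge.numHoriz_ofPair, ← (mem_filter.1 hp).2, ← two_mul, Nat.mul_sub]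
    _ = _ := by
        rw [sum_filter_card_fst_eq_card_snd (fun l => x ^ (2 * l) * y ^ (2 * (k - l))),
          Fintype.card_fin]
        simp [mul_assoc]
end

section
/- The polynomials p_k(x,y) = sum_{l=0}^{k} (k choose l)^2 x^{2l} y^{2(k-l)} satisfy the recurrence: sum_{j=0}^{k} (-1)^j (k choose j) (x^2+y^2)^j p_{k-j}(x,y) equals (xy)^k (k choose k/2) if k is even, and 0 if k is odd. -/
/-- The weight polynomial `p_k(x,y) = ∑_{l=0}^{k} (k choose l)^2 x^{2l} y^{2(k-l)}`. -/
noncomputable def pPoly (k : ℕ) (x y : ℝ) : ℝ :=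
  ∑ l ∈ Finset.range (k + 1), (k.choose l : ℝ) ^ 2 * x ^ (2 * l) * y ^ (2 * (k - l))

/-!
Write `s = x² + y²`, `a = x²`, `b = y²`. The polynomial `p_n` is the middle coefficient of
`(aX + b)^n (X + 1)^n = ((aX² + b) + sX)^n`, hence `p_n = ∑_i C(n,i) s^(n-i) c_i` with `c_i` the
middle coefficient of `(aX² + b)^i`, namely `C(i,i/2) (xy)^i` for even `i` and `0` for odd `i`.
The recurrence is the binomial inversion of this identity: after exchanging the sums, the inner
sum over `j` of `C(k,j) (-s)^j C(k-j,i) s^(k-j-i)` is `C(k,i) (-s + s)^(k-i)`.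
-/

open Finset Polynomial

theorem Nat.choose_mul_choose_sub_comm (n i j : ℕ) :
    n.choose j * (n - j).choose i = n.choose i * (n - i).choose j := by
  have hj := Nat.choose_mul (n := n) (Nat.le_add_left j i)
  have hi := Nat.choose_mul (n := n) (Nat.le_add_right i j)
  rw [Nat.add_sub_cancel] at hj
  rw [Nat.add_sub_cancel_left] at hi
  rw [← hj, ← hi, Nat.choose_symm_add]

theorem binomial_inversion {R : Type*} [CommRing R] (s : R) (c p : ℕ → R)
    (hp : ∀ n, p n = ∑ i ∈ range (n + 1), (n.choose i : R) * s ^ (n - i) * c i) (k : ℕ) :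
    ∑ j ∈ range (k + 1), (-1) ^ j * (k.choose j : R) * s ^ j * p (k - j) = c k := by
  have hswap : ∀ i ∈ range (k + 1),
      ∑ j ∈ range (k - i + 1),
          (-1) ^ j * (k.choose j : R) * s ^ j * ((k - j).choose i * s ^ (k - j - i) * c i)
        = k.choose i * (-s + s) ^ (k - i) * c i := by
    intro i hi
    rw [add_pow, mul_sum, sum_mul]
    refine sum_congr rfl fun j hj => ?_
    have hji : k - j - i = k - i - j := by omega
    have hc : (k.choose j : R) * (k - j).choose i = k.choose i * (k - i).choose j := by
      exact_mod_cast congrArg (Nat.cast : ℕ → R) (Nat.choose_mul_choose_sub_comm k i j)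
    rw [hji, neg_pow]
    linear_combination (-1) ^ j * s ^ j * s ^ (k - i - j) * c i * hc
  simp_rw [hp, mul_sum]
  rw [sum_comm' (t' := range (k + 1)) (s' := fun i => range (k - i + 1))
    (by intro j i; simp only [mem_range]; omega), sum_congr rfl hswap,
    sum_eq_single_of_mem k (self_mem_range_succ k)]
  · simp
  · intro i hi hik
    have : k - i ≠ 0 := by simp only [mem_range] at hi; omega
    simp [zero_pow this]

namespace Polynomial

variable {R : Type*} [CommSemiring R] (a b : R)

theorem coeff_C_mul_X_add_C_pow (n l : ℕ) :
    ((C a * X + C b) ^ n).coeff l = n.choose l * a ^ l * b ^ (n - l) := by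
  have hterm : ∀ m, (C a * X) ^ m * C b ^ (n - m) * (n.choose m : R[X])
      = C ((n.choose m : R) * a ^ m * b ^ (n - m)) * X ^ m := by
    intro m; simp only [mul_pow, C_mul, C_pow, map_natCast]; ring
  simp_rw [add_pow, finsetSum_coeff, hterm, coeff_C_mul_X_pow, sum_ite_eq, mem_range]
  split_ifs with hl
  · rfl
  · rw [Nat.choose_eq_zero_of_lt (by omega), Nat.cast_zero, zero_mul, zero_mul]

theorem coeff_C_mul_X_add_C_pow_mul_X_add_one_pow (n : ℕ) :
    ((C a * X + C b) ^ n * (X + 1) ^ n).coeff n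
      = ∑ l ∈ range (n + 1), (n.choose l : R) ^ 2 * a ^ l * b ^ (n - l) := by
  rw [coeff_mul, Nat.sum_antidiagonal_eq_sum_range_succ_mk]
  refine sum_congr rfl fun l hl => ?_
  rw [coeff_C_mul_X_add_C_pow, coeff_X_add_one_pow,
    Nat.choose_symm (Nat.lt_succ_iff.mp (mem_range.mp hl))]
  ring

theorem coeff_C_mul_X_sq_add_C_pow_self (i : ℕ) :
    ((C a * X ^ 2 + C b) ^ i).coeff i
      = if Even i then (i.choose (i / 2) : R) * (a * b) ^ (i / 2) else 0 := by
  have hexpand : C a * X ^ 2 + C b = expand R 2 (C a * X + C b) := by simp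
  rw [hexpand, ← map_pow, coeff_expand two_pos, coeff_C_mul_X_add_C_pow]
  by_cases hi : Even i
  · obtain ⟨m, rfl⟩ := hi
    have hm : (m + m) / 2 = m := by omega
    rw [if_pos ⟨m, (two_mul m).symm⟩, if_pos ⟨m, rfl⟩, hm, Nat.add_sub_cancel, mul_assoc, mul_pow]
  · rw [if_neg (by rwa [← even_iff_two_dvd]), if_neg hi]

end Polynomial

theorem sum_choose_sq_mul_pow_mul_pow {R : Type*} [CommSemiring R] (a b : R) (n : ℕ) :
    ∑ l ∈ range (n + 1), (n.choose l : R) ^ 2 * a ^ l * b ^ (n - l)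
      = ∑ i ∈ range (n + 1), (n.choose i : R) * (a + b) ^ (n - i) *
          (if Even i then (i.choose (i / 2) : R) * (a * b) ^ (i / 2) else 0) := by
  have htri : (C a * X + C b) * (X + 1) = (C a * X ^ 2 + C b) + C (a + b) * X := by
    simp only [C_add]; ring
  rw [← coeff_C_mul_X_add_C_pow_mul_X_add_one_pow, ← mul_pow, htri, add_pow, finsetSum_coeff]
  refine sum_congr rfl fun i hi => ?_
  have hterm : (C a * X ^ 2 + C b) ^ i * (C (a + b) * X) ^ (n - i) * (n.choose i : R[X])
      = C ((n.choose i : R) * (a + b) ^ (n - i)) * ((C a * X ^ 2 + C b) ^ i * X ^ (n - i)) := by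
    simp only [mul_pow, C_mul, C_pow, map_natCast]; ring
  rw [hterm, coeff_C_mul, coeff_mul_X_pow', if_pos (Nat.sub_le n i),
    Nat.sub_sub_self (Nat.lt_succ_iff.mp (mem_range.mp hi)), coeff_C_mul_X_sq_add_C_pow_self]

theorem pPoly_eq_sum_choose_mul_pow (x y : ℝ) (n : ℕ) :
    pPoly n x y = ∑ i ∈ range (n + 1), (n.choose i : ℝ) * (x ^ 2 + y ^ 2) ^ (n - i) *
      (if Even i then (x * y) ^ i * (i.choose (i / 2) : ℝ) else 0) := by
  simp_rw [pPoly, pow_mul, sum_choose_sq_mul_pow_mul_pow]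
  refine sum_congr rfl fun i _ => ?_
  split_ifs with hi
  · rw [← mul_pow, ← pow_mul, Nat.two_mul_div_two_of_even hi, mul_comm (i.choose (i / 2) : ℝ)]
  · rfl

/-- The inclusion–exclusion recurrence for the polynomials `p_k`:
`∑_{j=0}^{k} (-1)^j (k choose j) (x²+y²)^j p_{k-j}(x,y)` equals `(xy)^k (k choose k/2)`
for even `k`, and `0` for odd `k`. -/
theorem pPoly_recurrence (k : ℕ) (x y : ℝ) :
    ∑ j ∈ Finset.range (k + 1),
        (-1 : ℝ) ^ j * (k.choose j : ℝ) * (x ^ 2 + y ^ 2) ^ j * pPoly (k - j) x y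
      = if Even k then (x * y) ^ k * (k.choose (k / 2) : ℝ) else 0 :=
  binomial_inversion _ _ (fun n => pPoly n x y) (pPoly_eq_sum_choose_mul_pow x y) k
end

section
/- Let 0 < a < 1/2 and a < b < 1-a, and define lambda_pm = (sqrt(b(1-a)) +/ - sqrt(a(1-b)))^2. Then 0 <= lambda_- <= lambda_+ <= 1, and moreover for sigma in [-a,0], setting x = sqrt((b+sigma)(1-a+sigma))/(1+2 sigma) and y = sqrt((1-b+sigma)(a+sigma))/(1+2 sigma), one has x^2 + y^2 < 1. -/
/-!
By AM–GM, `√(b(1-a)) + √(a(1-b)) ≤ ((b + 1 - a) + (a + 1 - b)) / 2 = 1`, which gives `λ₊ ≤ 1`.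
For the second claim, `x² + y² = ((b+σ)(1-a+σ) + (1-b+σ)(a+σ)) / (1+2σ)²`, and the gap between
denominator and numerator is `(1-2a)(1-a-b) + 2(σ+a)(1-a+σ)`, which is positive for `σ ≥ -a`.
-/

theorem Real.sqrt_mul_le_half_add {x y : ℝ} (hx : 0 ≤ x) (hy : 0 ≤ y) :
    √(x * y) ≤ (x + y) / 2 := by
  rw [Real.sqrt_mul hx]
  nlinarith [sq_nonneg (√x - √y), Real.sq_sqrt hx, Real.sq_sqrt hy]

theorem sqrt_mul_one_sub_add_sqrt_mul_one_sub_le_one {x y : ℝ} (hx₀ : 0 ≤ x) (hx₁ : x ≤ 1)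
    (hy₀ : 0 ≤ y) (hy₁ : y ≤ 1) : √(x * (1 - y)) + √(y * (1 - x)) ≤ 1 := by
  have h₁ := Real.sqrt_mul_le_half_add hx₀ (sub_nonneg.2 hy₁)
  have h₂ := Real.sqrt_mul_le_half_add hy₀ (sub_nonneg.2 hx₁)
  linarith

theorem sq_sqrt_div_add_sq_sqrt_div_lt_one {p q d : ℝ} (hp : 0 ≤ p) (hq : 0 ≤ q)
    (h : p + q < d ^ 2) : (√p / d) ^ 2 + (√q / d) ^ 2 < 1 := by
  rw [div_pow, div_pow, Real.sq_sqrt hp, Real.sq_sqrt hq, ← add_div,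
    div_lt_one (by linarith)]
  exact h

theorem jacobi_numerator_lt_sq {a b σ : ℝ} (ha : a < 1 / 2) (hab : a + b < 1) (hσ : -a ≤ σ) :
    (b + σ) * (1 - a + σ) + (1 - b + σ) * (a + σ) < (1 + 2 * σ) ^ 2 := by
  have key : (1 + 2 * σ) ^ 2 - ((b + σ) * (1 - a + σ) + (1 - b + σ) * (a + σ))
      = (1 - 2 * a) * (1 - a - b) + 2 * ((σ + a) * (1 - a + σ)) := by ring
  have hpos : 0 < (1 - 2 * a) * (1 - a - b) := mul_pos (by linarith) (by linarith)
  have hnonneg : 0 ≤ (σ + a) * (1 - a + σ) := mul_nonneg (by linarith) (by linarith)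
  linarith

/-- With `0 < a < 1/2` and `a < b < 1-a`, setting
`λ± = (√(b(1-a)) ± √(a(1-b)))²`, we have `0 ≤ λ₋ ≤ λ₊ ≤ 1`; and for `σ ∈ [-a,0]`,
setting `x = √((b+σ)(1-a+σ))/(1+2σ)` and `y = √((1-b+σ)(a+σ))/(1+2σ)`,
we have `x² + y² < 1`. -/
theorem jacobi_support_bounds (a b : ℝ) (ha : 0 < a) (ha' : a < 1 / 2)
    (hab : a < b) (hab' : b < 1 - a) :
    (0 ≤ (Real.sqrt (b * (1 - a)) - Real.sqrt (a * (1 - b))) ^ 2 ∧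
     (Real.sqrt (b * (1 - a)) - Real.sqrt (a * (1 - b))) ^ 2
        ≤ (Real.sqrt (b * (1 - a)) + Real.sqrt (a * (1 - b))) ^ 2 ∧
     (Real.sqrt (b * (1 - a)) + Real.sqrt (a * (1 - b))) ^ 2 ≤ 1) ∧
    ∀ σ : ℝ, -a ≤ σ → σ ≤ 0 →
      (Real.sqrt ((b + σ) * (1 - a + σ)) / (1 + 2 * σ)) ^ 2 +
        (Real.sqrt ((1 - b + σ) * (a + σ)) / (1 + 2 * σ)) ^ 2 < 1 := by
  refine ⟨⟨sq_nonneg _, ?_, ?_⟩, fun σ hσ _ => ?_⟩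
  · nlinarith [mul_nonneg (Real.sqrt_nonneg (b * (1 - a))) (Real.sqrt_nonneg (a * (1 - b)))]
  · exact pow_le_one₀ (by positivity)
      (sqrt_mul_one_sub_add_sqrt_mul_one_sub_le_one (by linarith) (by linarith) ha.le (by linarith))
  · exact sq_sqrt_div_add_sq_sqrt_div_lt_one
      (mul_nonneg (by linarith) (by linarith)) (mul_nonneg (by linarith) (by linarith))
      (jacobi_numerator_lt_sq ha' (by linarith) hσ)
end

section
/- Let mu_beta be the probability measure on [-1,1] with density proportional to (1-x)^{p-1}(1+x)^{q-1} for p, q > 0. Then for every continuously differentiable function f on [-1,1] with mean zero under mu_beta, Var(f) <= (1/(p+q)) * integral of (1-x^2) |f'(x)|^2 dmu_beta(x). -/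
/-!
The Jacobi operator `L f = (1 - x²) f'' + (q - p - (p + q) x) f'` is symmetric for the weight
`w = (1 - x)^(p-1) (1 + x)^(q-1)` on `(-1, 1)`, with Dirichlet form `∫ (1 - x²) f' g' w`: indeed
`((1 - x²) w)' = (q - p - (p + q) x) w`, and `(1 - x²) w` vanishes at `±1`. Differentiation
intertwines `L` with the Jacobi operator `L₁` of parameters `(p + 1, q + 1)`, whose weight is
`(1 - x²) w`: `(L u)' = L₁ u' - (p + q) u'`. Hence
`∫ (L u)² w = (p + q) ∫ (1 - x²) u'² w + ∫ (1 - x²)² u''² w ≥ (p + q) ∫ (1 - x²) u'² w`.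

On polynomials `L` is triangular with diagonal `-n (n + p + q - 1)`, so every polynomial `P` of
mean zero is `L v` for a polynomial `v`. Then `∫ P² w = -∫ (1 - x²) v' P' w`, and expanding
`0 ≤ ∫ (1 - x²) (P' + (p + q) v')² w` with the previous inequality for `v` yields
`(p + q) ∫ P² w ≤ ∫ (1 - x²) P'² w`. A `C¹` function is a limit in `C¹[-1, 1]` of polynomials
(Weierstrass applied to `f'`), and the inequality passes to the limit by dominated convergence.
-/

open Polynomial MeasureTheory Set Filter Topology intervalIntegral

theorem Polynomial.exists_derivative_eq {K : Type*} [Field K] [CharZero K] (g : K[X]) :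
    ∃ Q : K[X], derivative Q = g := by
  induction g using Polynomial.induction_on' with
  | add g h hg hh =>
    obtain ⟨G, rfl⟩ := hg
    obtain ⟨H, rfl⟩ := hh
    exact ⟨G + H, derivative_add⟩
  | monomial n c =>
    refine ⟨monomial (n + 1) (c / (n + 1)), ?_⟩
    rw [derivative_monomial, add_tsub_cancel_right]
    push_cast
    field_simp

theorem exists_polynomial_near_of_contDiffOn {f : ℝ → ℝ} {a b : ℝ} (hab : a < b)
    (hf : ContDiffOn ℝ 1 f (Icc a b)) {ε : ℝ} (hε : 0 < ε) :
    ∃ Q : ℝ[X], ∀ x ∈ Icc a b, |Q.eval x - f x| ≤ ε * (b - a) ∧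
      |(derivative Q).eval x - derivWithin f (Icc a b) x| ≤ ε := by
  obtain ⟨g, hg⟩ := exists_polynomial_near_of_continuousOn a b _
    (hf.continuousOn_derivWithin (uniqueDiffOn_Icc hab) le_rfl) ε hε
  obtain ⟨G, hG⟩ := g.exists_derivative_eq
  set Q := G + C (f a - G.eval a)
  have hQ : derivative Q = g := by simp [Q, hG]
  have hderiv : ∀ x ∈ Icc a b, HasDerivWithinAt (fun y => Q.eval y - f y)
      (g.eval x - derivWithin f (Icc a b) x) (Icc a b) x := fun x hx =>
    hQ ▸ (Q.hasDerivAt x).hasDerivWithinAt.sub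
      ((hf.differentiableOn one_ne_zero x hx).hasDerivWithinAt)
  have hmvt := norm_image_sub_le_of_norm_deriv_le_segment' hderiv
    (fun x hx => (hg x (Ico_subset_Icc_self hx)).le)
  refine ⟨Q, fun x hx => ⟨?_, hQ ▸ (hg x hx).le⟩⟩
  have hQa : Q.eval a - f a = 0 := by simp [Q]
  have := hmvt x hx
  rw [hQa, sub_zero, Real.norm_eq_abs] at this
  exact this.trans (mul_le_mul_of_nonneg_left (by linarith [hx.2]) hε.le)

theorem exists_seq_polynomial_tendstoUniformlyOn {f : ℝ → ℝ} {a b : ℝ} (hab : a < b)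
    (hf : ContDiffOn ℝ 1 f (Icc a b)) :
    ∃ Q : ℕ → ℝ[X], TendstoUniformlyOn (fun n x => ((Q n).eval x, (derivative (Q n)).eval x))
      (fun x => (f x, derivWithin f (Icc a b) x)) atTop (Icc a b) := by
  choose Q hQ using fun n : ℕ =>
    exists_polynomial_near_of_contDiffOn hab hf (Nat.one_div_pos_of_nat (n := n))
  refine ⟨Q, Metric.tendstoUniformlyOn_iff.2 fun ε hε => ?_⟩
  have hlim : Tendsto (fun n : ℕ => 1 / ((n : ℝ) + 1) * (b - a + 1)) atTop (𝓝 0) := by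
    simpa using tendsto_one_div_add_atTop_nhds_zero_nat.mul_const (b - a + 1)
  filter_upwards [hlim.eventually (gt_mem_nhds hε)] with n hn x hx
  obtain ⟨h1, h2⟩ := hQ n x hx
  have hδ : (0 : ℝ) < 1 / ((n : ℝ) + 1) := Nat.one_div_pos_of_nat
  rw [dist_comm, Prod.dist_eq, max_lt_iff, Real.dist_eq, Real.dist_eq]
  constructor <;> dsimp only <;> nlinarith

theorem tendsto_intervalIntegral_mul_of_tendstoUniformlyOn {E : Type*} [NormedAddCommGroup E]
    [ProperSpace E] {a b : ℝ} {w : ℝ → ℝ} (hw : IntervalIntegrable w volume a b)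
    {U : ℕ → ℝ → E} {U₀ : ℝ → E} (hU : ∀ n, ContinuousOn (U n) (uIcc a b))
    (hUU₀ : TendstoUniformlyOn U U₀ atTop (uIcc a b)) {Φ : ℝ → E → ℝ}
    (hΦ : Continuous (Function.uncurry Φ)) :
    Tendsto (fun n => ∫ x in a..b, Φ x (U n x) * w x) atTop
      (𝓝 (∫ x in a..b, Φ x (U₀ x) * w x)) := by
  have hU₀ : ContinuousOn U₀ (uIcc a b) := hUU₀.continuousOn (Frequently.of_forall hU)
  obtain ⟨M, hM⟩ := isCompact_uIcc.exists_bound_of_continuousOn hU₀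
  obtain ⟨C, hC⟩ := (isCompact_uIcc.prod (isCompact_closedBall (0 : E) (M + 1)))
    |>.exists_bound_of_continuousOn hΦ.continuousOn
  have hbound : ∀ᶠ n in atTop, ∀ x ∈ uIcc a b, ‖Φ x (U n x)‖ ≤ C := by
    filter_upwards [Metric.tendstoUniformlyOn_iff.1 hUU₀ 1 one_pos] with n hn x hx
    refine hC (x, U n x) ⟨hx, mem_closedBall_zero_iff.2 ?_⟩
    have := hn x hx
    rw [dist_comm, dist_eq_norm] at this
    linarith [norm_le_insert' (U n x) (U₀ x), hM x hx]
  refine intervalIntegral.tendsto_integral_filter_of_dominated_convergence (fun x => C * ‖w x‖)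
    (.of_forall fun n => ?_) (hbound.mono fun n hn => .of_forall fun x hx => ?_)
    (hw.norm.const_mul C) (.of_forall fun x hx => ?_)
  · exact (intervalIntegrable_iff.1 (hw.continuousOn_mul
      (hΦ.comp_continuousOn (continuousOn_id.prodMk (hU n))))).aestronglyMeasurable
  · rw [norm_mul]
    exact mul_le_mul_of_nonneg_right (hn x (uIoc_subset_uIcc hx)) (norm_nonneg _)
  · exact ((hΦ.tendsto (x, U₀ x)).comp (tendsto_const_nhds.prodMk_nhds
      (hUU₀.tendsto_at (uIoc_subset_uIcc hx)))).mul_const (w x)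

section withDensity

variable {α : Type*} [MeasurableSpace α] {ν : Measure α} {ρ : α → ℝ} {Z : ℝ}

lemma pos_of_isProbabilityMeasure_withDensity_ofReal_div (hρ : 0 ≤ᵐ[ν] ρ)
    (h : IsProbabilityMeasure (ν.withDensity fun x => ENNReal.ofReal (ρ x / Z))) : 0 < Z := by
  by_contra! hZ
  refine @IsProbabilityMeasure.ne_zero _ _ _ h ?_
  rw [withDensity_congr_ae (g := 0), withDensity_zero]
  filter_upwards [hρ] with x hx
  exact ENNReal.ofReal_eq_zero.2 (div_nonpos_of_nonneg_of_nonpos hx hZ)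

lemma integral_withDensity_ofReal_div (hρm : Measurable ρ) (hρ : 0 ≤ᵐ[ν] ρ) (hZ : 0 ≤ Z)
    (g : α → ℝ) :
    ∫ x, g x ∂ν.withDensity (fun x => ENNReal.ofReal (ρ x / Z)) = Z⁻¹ * ∫ x, g x * ρ x ∂ν := by
  rw [integral_withDensity_eq_integral_toReal_smul (by fun_prop)
    (.of_forall fun _ => ENNReal.ofReal_lt_top), ← MeasureTheory.integral_const_mul]
  refine integral_congr_ae ?_
  filter_upwards [hρ] with x hx
  rw [ENNReal.toReal_ofReal (div_nonneg hx hZ), smul_eq_mul]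
  ring

end withDensity

section Jacobi

variable {p q : ℝ}

noncomputable def jacobiWeight (p q x : ℝ) : ℝ := (1 - x) ^ (p - 1) * (1 + x) ^ (q - 1)

lemma jacobiWeight_pos {x : ℝ} (hx : x ∈ Ioo (-1 : ℝ) 1) : 0 < jacobiWeight p q x :=
  mul_pos (Real.rpow_pos_of_pos (by linarith [hx.2]) _)
    (Real.rpow_pos_of_pos (by linarith [hx.1]) _)

lemma jacobiWeight_nonneg {x : ℝ} (hx : x ∈ Icc (-1 : ℝ) 1) : 0 ≤ jacobiWeight p q x :=
  mul_nonneg (Real.rpow_nonneg (by linarith [hx.2]) _) (Real.rpow_nonneg (by linarith [hx.1]) _)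

lemma measurable_jacobiWeight : Measurable (jacobiWeight p q) := by
  unfold jacobiWeight; fun_prop

lemma continuous_jacobiWeight (hp : 1 ≤ p) (hq : 1 ≤ q) : Continuous (jacobiWeight p q) :=
  ((continuous_const.sub continuous_id).rpow_const fun _ => Or.inr (by linarith)).mul
    ((continuous_const.add continuous_id).rpow_const fun _ => Or.inr (by linarith))

lemma intervalIntegrable_jacobiWeight (hp : 0 < p) (hq : 0 < q) :
    IntervalIntegrable (jacobiWeight p q) volume (-1) 1 := by
  have hleft : IntervalIntegrable (jacobiWeight p q) volume (-1) 0 := by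
    have h : IntervalIntegrable (fun x : ℝ => (x + 1) ^ (q - 1)) volume (-1) 0 := by
      simpa using (intervalIntegrable_rpow' (a := 0) (b := 1)
        (by linarith : -1 < q - 1)).comp_add_right 1
    refine (h.continuousOn_mul (g := fun x => (1 - x) ^ (p - 1)) ?_).congr fun x _ => ?_
    · exact (continuous_const.sub continuous_id).continuousOn.rpow_const fun x hx => by
        rw [uIcc_of_le (by norm_num)] at hx; exact Or.inl (by linarith [hx.2] : (0 : ℝ) < 1 - x).ne'
    · simp [jacobiWeight, add_comm]
  have hright : IntervalIntegrable (jacobiWeight p q) volume 0 1 := by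
    have h : IntervalIntegrable (fun x : ℝ => (1 - x) ^ (p - 1)) volume 0 1 := by
      simpa using ((intervalIntegrable_rpow' (a := 0) (b := 1)
        (by linarith : -1 < p - 1)).comp_sub_left 1).symm
    refine (h.mul_continuousOn (g := fun x => (1 + x) ^ (q - 1)) ?_).congr fun x _ => ?_
    · exact (continuous_const.add continuous_id).continuousOn.rpow_const fun x hx => by
        rw [uIcc_of_le (by norm_num)] at hx; exact Or.inl (by linarith [hx.1] : (0 : ℝ) < 1 + x).ne'
    · simp [jacobiWeight]
  exact hleft.trans hright

lemma jacobiWeight_add_one (hp : 0 < p) (hq : 0 < q) {x : ℝ} (hx : x ∈ Icc (-1 : ℝ) 1) :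
    jacobiWeight (p + 1) (q + 1) x = (1 - x ^ 2) * jacobiWeight p q x := by
  have h1 : (1 - x) ^ p = (1 - x) ^ (p - 1) * (1 - x) := by
    rw [← Real.rpow_add_one' (by linarith [hx.2]) (by linarith), sub_add_cancel]
  have h2 : (1 + x) ^ q = (1 + x) ^ (q - 1) * (1 + x) := by
    rw [← Real.rpow_add_one' (by linarith [hx.1]) (by linarith), sub_add_cancel]
  simp only [jacobiWeight, add_sub_cancel_right, h1, h2]
  ring

lemma hasDerivAt_jacobiWeight_add_one {x : ℝ} (hx : x ∈ Ioo (-1 : ℝ) 1) :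
    HasDerivAt (jacobiWeight (p + 1) (q + 1)) ((q - p - (p + q) * x) * jacobiWeight p q x) x := by
  have h1 : 1 - x ≠ 0 := by linarith [hx.2]
  have h2 : 1 + x ≠ 0 := by linarith [hx.1]
  have d1 := ((hasDerivAt_id x).const_sub 1).rpow_const (p := p) (Or.inl h1)
  have d2 := ((hasDerivAt_id x).const_add 1).rpow_const (p := q) (Or.inl h2)
  have hw : jacobiWeight (p + 1) (q + 1) = fun y => (1 - y) ^ p * (1 + y) ^ q := by
    ext y; simp [jacobiWeight]
  rw [hw]
  refine (d1.mul d2).congr_deriv ?_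
  have e1 : (1 - x) ^ p = (1 - x) ^ (p - 1) * (1 - x) := by
    rw [← Real.rpow_add_one h1, sub_add_cancel]
  have e2 : (1 + x) ^ q = (1 + x) ^ (q - 1) * (1 + x) := by
    rw [← Real.rpow_add_one h2, sub_add_cancel]
  simp only [jacobiWeight, id, e1, e2]
  ring

noncomputable def jacobiOp (p q : ℝ) : ℝ[X] →ₗ[ℝ] ℝ[X] :=
  LinearMap.mulLeft ℝ (1 - X ^ 2) ∘ₗ derivative ∘ₗ derivative
    + LinearMap.mulLeft ℝ (C (q - p) - C (p + q) * X) ∘ₗ derivative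

lemma jacobiOp_apply (f : ℝ[X]) : jacobiOp p q f =
    (1 - X ^ 2) * derivative (derivative f) + (C (q - p) - C (p + q) * X) * derivative f := rfl

lemma eval_jacobiOp (f : ℝ[X]) (x : ℝ) : (jacobiOp p q f).eval x =
    (1 - x ^ 2) * (derivative (derivative f)).eval x
      + (q - p - (p + q) * x) * (derivative f).eval x := by
  simp [jacobiOp_apply]

lemma coeff_jacobiOp (f : ℝ[X]) (d : ℕ) : (jacobiOp p q f).coeff d =
    (d + 1) * (d + 2) * f.coeff (d + 2) + (q - p) * (d + 1) * f.coeff (d + 1)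
      - d * (d + p + q - 1) * f.coeff d := by
  have e : jacobiOp p q f = derivative (derivative f) - X ^ 2 * derivative (derivative f)
      + C (q - p) * derivative f - C (p + q) * (X ^ 1 * derivative f) := by
    rw [jacobiOp_apply]; ring
  rw [e]
  simp only [coeff_add, coeff_sub, coeff_C_mul, coeff_X_pow_mul', coeff_derivative]
  rcases d with _ | _ | d <;> simp <;> ring

lemma derivative_jacobiOp (f : ℝ[X]) : derivative (jacobiOp p q f) =
    jacobiOp (p + 1) (q + 1) (derivative f) - C (p + q) * derivative f := by
  simp only [jacobiOp_apply, map_sub, map_add, derivative_mul, derivative_one,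
    derivative_X_pow_succ, Nat.cast_one, map_one, pow_one, derivative_C, derivative_X]
  ring

lemma integral_jacobi_divergence_eq_zero (hp : 0 < p) (hq : 0 < q) (u : ℝ[X]) :
    ∫ x in (-1 : ℝ)..1, ((1 - x ^ 2) * (derivative u).eval x + (q - p - (p + q) * x) * u.eval x)
      * jacobiWeight p q x = 0 := by
  have hderiv : ∀ x ∈ Ioo (-1 : ℝ) 1,
      HasDerivAt (fun y => jacobiWeight (p + 1) (q + 1) y * u.eval y)
        (((1 - x ^ 2) * (derivative u).eval x + (q - p - (p + q) * x) * u.eval x)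
          * jacobiWeight p q x) x := fun x hx => by
    refine ((hasDerivAt_jacobiWeight_add_one hx).mul (u.hasDerivAt x)).congr_deriv ?_
    rw [jacobiWeight_add_one hp hq (Ioo_subset_Icc_self hx)]
    ring
  rw [integral_eq_sub_of_hasDerivAt_of_le (by norm_num)
    ((continuous_jacobiWeight (by linarith) (by linarith)).mul u.continuous).continuousOn hderiv
    ((intervalIntegrable_jacobiWeight hp hq).continuousOn_mul (by fun_prop))]
  simp [jacobiWeight, Real.zero_rpow hp.ne', Real.zero_rpow hq.ne']

lemma integral_jacobiOp_mul (hp : 0 < p) (hq : 0 < q) (f g : ℝ[X]) :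
    ∫ x in (-1 : ℝ)..1, (jacobiOp p q f).eval x * g.eval x * jacobiWeight p q x =
      -∫ x in (-1 : ℝ)..1, (1 - x ^ 2) * ((derivative f).eval x * (derivative g).eval x)
        * jacobiWeight p q x := by
  have hw := intervalIntegrable_jacobiWeight hp hq
  rw [eq_neg_iff_add_eq_zero, ← integral_add (hw.continuousOn_mul (by fun_prop))
    (hw.continuousOn_mul (by fun_prop)),
    ← integral_jacobi_divergence_eq_zero hp hq (derivative f * g)]
  refine integral_congr fun x _ => ?_
  simp only [eval_jacobiOp, derivative_mul, eval_add, eval_mul]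
  ring

lemma integral_jacobiOp (hp : 0 < p) (hq : 0 < q) (f : ℝ[X]) :
    ∫ x in (-1 : ℝ)..1, (jacobiOp p q f).eval x * jacobiWeight p q x = 0 := by
  simpa [eval_jacobiOp] using integral_jacobi_divergence_eq_zero hp hq (derivative f)

lemma integral_jacobiWeight_pos (hp : 0 < p) (hq : 0 < q) :
    0 < ∫ x in (-1 : ℝ)..1, jacobiWeight p q x :=
  intervalIntegral_pos_of_pos_on (intervalIntegrable_jacobiWeight hp hq)
    (fun _ hx => jacobiWeight_pos hx) (by norm_num)

theorem exists_jacobiOp_eq (hp : 0 < p) (hq : 0 < q) (P : ℝ[X])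
    (hP : ∫ x in (-1 : ℝ)..1, P.eval x * jacobiWeight p q x = 0) : ∃ u, jacobiOp p q u = P := by
  have hw := intervalIntegrable_jacobiWeight hp hq
  suffices ∀ n (P : ℝ[X]), P.natDegree ≤ n →
      ∫ x in (-1 : ℝ)..1, P.eval x * jacobiWeight p q x = 0 → ∃ u, jacobiOp p q u = P from
    this _ P le_rfl hP
  intro n
  induction n with
  | zero =>
    intro P hdeg hP
    rw [eq_C_of_natDegree_le_zero hdeg] at hP ⊢
    simp only [eval_C, intervalIntegral.integral_const_mul, mul_eq_zero,
      (integral_jacobiWeight_pos hp hq).ne', or_false] at hP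
    exact ⟨0, by simp [hP]⟩
  | succ n ih =>
    intro P hdeg hP
    set l : ℝ := (n + 1) * (n + p + q)
    have hl : l ≠ 0 := by positivity
    -- `L` multiplies the coefficient of `X ^ (n + 1)` by `-l`
    have hdeg' : (P + l⁻¹ • jacobiOp p q P).natDegree ≤ n := by
      rw [natDegree_le_iff_coeff_eq_zero]
      intro N hN
      have h1 : P.coeff (N + 1) = 0 := coeff_eq_zero_of_natDegree_lt (by omega)
      have h2 : P.coeff (N + 2) = 0 := coeff_eq_zero_of_natDegree_lt (by omega)
      rw [coeff_add, coeff_smul, coeff_jacobiOp, h1, h2, smul_eq_mul]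
      rcases (Nat.succ_le_of_lt hN).eq_or_lt with rfl | hN'
      · field_simp; push_cast; ring
      · simp [coeff_eq_zero_of_natDegree_lt (hdeg.trans_lt hN')]
    have hmean' :
        ∫ x in (-1 : ℝ)..1, (P + l⁻¹ • jacobiOp p q P).eval x * jacobiWeight p q x = 0 := by
      simp only [eval_add, eval_smul, smul_eq_mul, add_mul, mul_assoc]
      rw [integral_add (hw.continuousOn_mul (by fun_prop))
        ((hw.continuousOn_mul (by fun_prop)).const_mul _), intervalIntegral.integral_const_mul,
        integral_jacobiOp hp hq, hP, mul_zero, add_zero]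
    obtain ⟨v, hv⟩ := ih _ hdeg' hmean'
    exact ⟨v - l⁻¹ • P, by rw [map_sub, map_smul, hv, add_sub_cancel_right]⟩

theorem mul_integral_le_integral_jacobiOp_sq (hp : 0 < p) (hq : 0 < q) (u : ℝ[X]) :
    (p + q) * ∫ x in (-1 : ℝ)..1, (1 - x ^ 2) * (derivative u).eval x ^ 2 * jacobiWeight p q x ≤
      ∫ x in (-1 : ℝ)..1, (jacobiOp p q u).eval x ^ 2 * jacobiWeight p q x := by
  have hw := intervalIntegrable_jacobiWeight hp hq
  have hw₁ := intervalIntegrable_jacobiWeight (by linarith : 0 < p + 1) (by linarith : 0 < q + 1)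
  have hsplit : ∫ x in (-1 : ℝ)..1, (1 - x ^ 2) * ((derivative u).eval x
        * (derivative (jacobiOp p q u)).eval x) * jacobiWeight p q x =
      (∫ x in (-1 : ℝ)..1, (jacobiOp (p + 1) (q + 1) (derivative u)).eval x
        * (derivative u).eval x * jacobiWeight (p + 1) (q + 1) x)
      - (p + q) * ∫ x in (-1 : ℝ)..1,
          (1 - x ^ 2) * (derivative u).eval x ^ 2 * jacobiWeight p q x := by
    rw [← intervalIntegral.integral_const_mul, ← intervalIntegral.integral_sub]
    · refine integral_congr fun x hx => ?_
      rw [uIcc_of_le (by norm_num)] at hx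
      simp only [derivative_jacobiOp, eval_sub, eval_mul, eval_C, jacobiWeight_add_one hp hq hx]
      ring
    · exact hw₁.continuousOn_mul (by fun_prop)
    · exact (hw.continuousOn_mul (by fun_prop)).const_mul _
  have hnonpos : ∫ x in (-1 : ℝ)..1, (jacobiOp (p + 1) (q + 1) (derivative u)).eval x
      * (derivative u).eval x * jacobiWeight (p + 1) (q + 1) x ≤ 0 := by
    rw [integral_jacobiOp_mul (by linarith) (by linarith), neg_nonpos]
    refine integral_nonneg (by norm_num) fun x hx => ?_
    have : 0 ≤ 1 - x ^ 2 := by nlinarith [hx.1, hx.2]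
    exact mul_nonneg (mul_nonneg this (mul_self_nonneg _)) (jacobiWeight_nonneg hx)
  have hgreen := integral_jacobiOp_mul hp hq u (jacobiOp p q u)
  simp only [← sq] at hgreen
  linarith

theorem jacobi_poincare_polynomial (hp : 0 < p) (hq : 0 < q) (P : ℝ[X])
    (hP : ∫ x in (-1 : ℝ)..1, P.eval x * jacobiWeight p q x = 0) :
    (p + q) * ∫ x in (-1 : ℝ)..1, P.eval x ^ 2 * jacobiWeight p q x ≤
      ∫ x in (-1 : ℝ)..1, (1 - x ^ 2) * (derivative P).eval x ^ 2 * jacobiWeight p q x := by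
  have hw := intervalIntegrable_jacobiWeight hp hq
  obtain ⟨v, hv⟩ := exists_jacobiOp_eq hp hq P hP
  set l := p + q
  have hl : 0 < l := by positivity
  have hgreen := integral_jacobiOp_mul hp hq v P
  have hbochner := mul_integral_le_integral_jacobiOp_sq hp hq v
  simp only [hv, ← sq] at hgreen hbochner
  have hexpand : ∫ x in (-1 : ℝ)..1, (1 - x ^ 2) * ((derivative P).eval x
        + l * (derivative v).eval x) ^ 2 * jacobiWeight p q x =
      (∫ x in (-1 : ℝ)..1, (1 - x ^ 2) * (derivative P).eval x ^ 2 * jacobiWeight p q x)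
      + 2 * l * (∫ x in (-1 : ℝ)..1, (1 - x ^ 2) * ((derivative v).eval x * (derivative P).eval x)
          * jacobiWeight p q x)
      + l ^ 2 * ∫ x in (-1 : ℝ)..1,
          (1 - x ^ 2) * (derivative v).eval x ^ 2 * jacobiWeight p q x := by
    rw [← intervalIntegral.integral_const_mul, ← intervalIntegral.integral_const_mul,
      ← intervalIntegral.integral_add, ← intervalIntegral.integral_add]
    · exact integral_congr fun x _ => by ring
    all_goals first
      | exact hw.continuousOn_mul (by fun_prop)
      | exact (hw.continuousOn_mul (by fun_prop)).const_mul _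
      | exact (hw.continuousOn_mul (by fun_prop)).add
          ((hw.continuousOn_mul (by fun_prop)).const_mul _)
  have hnonneg : 0 ≤ ∫ x in (-1 : ℝ)..1, (1 - x ^ 2) * ((derivative P).eval x
      + l * (derivative v).eval x) ^ 2 * jacobiWeight p q x := by
    refine integral_nonneg (by norm_num) fun x hx => ?_
    have : 0 ≤ 1 - x ^ 2 := by nlinarith [hx.1, hx.2]
    exact mul_nonneg (mul_nonneg this (sq_nonneg _)) (jacobiWeight_nonneg hx)
  nlinarith [mul_le_mul_of_nonneg_left hbochner hl.le]

theorem jacobi_poincare_polynomial_variance (hp : 0 < p) (hq : 0 < q) (P : ℝ[X]) :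
    (p + q) * ((∫ x in (-1 : ℝ)..1, jacobiWeight p q x)
        * (∫ x in (-1 : ℝ)..1, P.eval x ^ 2 * jacobiWeight p q x)
        - (∫ x in (-1 : ℝ)..1, P.eval x * jacobiWeight p q x) ^ 2) ≤
      (∫ x in (-1 : ℝ)..1, jacobiWeight p q x)
        * ∫ x in (-1 : ℝ)..1, (1 - x ^ 2) * (derivative P).eval x ^ 2 * jacobiWeight p q x := by
  have hw := intervalIntegrable_jacobiWeight hp hq
  have hW := integral_jacobiWeight_pos hp hq
  set W := ∫ x in (-1 : ℝ)..1, jacobiWeight p q x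
  set M := ∫ x in (-1 : ℝ)..1, P.eval x * jacobiWeight p q x
  set A := ∫ x in (-1 : ℝ)..1, P.eval x ^ 2 * jacobiWeight p q x
  -- `R = W • (P - mean P)`
  set R := C W * P - C M
  have hRmean : ∫ x in (-1 : ℝ)..1, R.eval x * jacobiWeight p q x = 0 := by
    simp only [R, eval_sub, eval_mul, eval_C, sub_mul, mul_assoc]
    rw [intervalIntegral.integral_sub ((hw.continuousOn_mul (by fun_prop)).const_mul _)
      (hw.const_mul _), intervalIntegral.integral_const_mul, intervalIntegral.integral_const_mul]
    ring
  have hRsq : ∫ x in (-1 : ℝ)..1, R.eval x ^ 2 * jacobiWeight p q x = W * (W * A - M ^ 2) := by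
    have : ∫ x in (-1 : ℝ)..1, R.eval x ^ 2 * jacobiWeight p q x =
        ∫ x in (-1 : ℝ)..1, (W ^ 2 * (P.eval x ^ 2 * jacobiWeight p q x)
          - 2 * W * M * (P.eval x * jacobiWeight p q x)) + M ^ 2 * jacobiWeight p q x :=
      integral_congr fun x _ => by simp only [R, eval_sub, eval_mul, eval_C]; ring
    rw [this, intervalIntegral.integral_add (((hw.continuousOn_mul (by fun_prop)).const_mul _).sub
      ((hw.continuousOn_mul (by fun_prop)).const_mul _)) (hw.const_mul _),
      intervalIntegral.integral_sub ((hw.continuousOn_mul (by fun_prop)).const_mul _)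
      ((hw.continuousOn_mul (by fun_prop)).const_mul _)]
    simp only [intervalIntegral.integral_const_mul]
    ring
  have hRenergy : ∫ x in (-1 : ℝ)..1, (1 - x ^ 2) * (derivative R).eval x ^ 2 * jacobiWeight p q x =
      W ^ 2 * ∫ x in (-1 : ℝ)..1, (1 - x ^ 2) * (derivative P).eval x ^ 2 * jacobiWeight p q x := by
    rw [← intervalIntegral.integral_const_mul]
    refine integral_congr fun x _ => ?_
    simp only [R, derivative_sub, derivative_mul, derivative_C, zero_mul, zero_add, sub_zero,
      eval_mul, eval_C]
    ring
  have h := jacobi_poincare_polynomial hp hq R hRmean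
  rw [hRsq, hRenergy] at h
  nlinarith

theorem jacobi_poincare_of_contDiffOn (hp : 0 < p) (hq : 0 < q) {f : ℝ → ℝ}
    (hf : ContDiffOn ℝ 1 f (Icc (-1) 1))
    (hmean : ∫ x in (-1 : ℝ)..1, f x * jacobiWeight p q x = 0) :
    (p + q) * ∫ x in (-1 : ℝ)..1, f x ^ 2 * jacobiWeight p q x ≤
      ∫ x in (-1 : ℝ)..1, (1 - x ^ 2) * deriv f x ^ 2 * jacobiWeight p q x := by
  obtain ⟨Q, hQ⟩ := exists_seq_polynomial_tendstoUniformlyOn (by norm_num : (-1 : ℝ) < 1) hf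
  have hlim (Φ : ℝ → ℝ × ℝ → ℝ) (hΦ : Continuous (Function.uncurry Φ)) :=
    tendsto_intervalIntegral_mul_of_tendstoUniformlyOn (intervalIntegrable_jacobiWeight hp hq)
      (fun n => by fun_prop) (hQ.mono (uIcc_of_le (by norm_num)).subset) hΦ
  have hsq := hlim (fun _ y => y.1 ^ 2) (by fun_prop)
  have hmean_lim := hlim (fun _ y => y.1) (by fun_prop)
  have henergy := hlim (fun x y => (1 - x ^ 2) * y.2 ^ 2) (by fun_prop)
  simp only [hmean] at hsq hmean_lim henergy
  have hW := integral_jacobiWeight_pos hp hq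
  have key := le_of_tendsto_of_tendsto'
    (((hsq.const_mul _).sub (hmean_lim.pow 2)).const_mul (p + q)) (henergy.const_mul _)
    fun n => jacobi_poincare_polynomial_variance hp hq (Q n)
  have hderiv :
      ∫ x in (-1 : ℝ)..1, (1 - x ^ 2) * derivWithin f (Icc (-1) 1) x ^ 2 * jacobiWeight p q x
      = ∫ x in (-1 : ℝ)..1, (1 - x ^ 2) * deriv f x ^ 2 * jacobiWeight p q x := by
    refine integral_congr fun x hx => ?_
    rw [uIcc_of_le (by norm_num)] at hx
    rcases eq_endpoints_or_mem_Ioo_of_mem_Icc hx with rfl | rfl | hx'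
    · norm_num
    · norm_num
    · rw [derivWithin_of_mem_nhds (Icc_mem_nhds hx'.1 hx'.2)]
  rw [hderiv] at key
  nlinarith

end Jacobi

/-- Poincaré inequality for the Jacobi-type measure: let `μ` be the probability measure on
`[-1,1]` with density proportional to `(1-x)^{p-1}(1+x)^{q-1}` (`p, q > 0`).  Then for every
continuously differentiable `f` on `[-1,1]` with mean zero under `μ`,
`Var f = ∫ f² dμ ≤ (1/(p+q)) ∫ (1-x²) f'(x)² dμ`. -/
theorem jacobi_measure_poincare (p q : ℝ) (hp : 0 < p) (hq : 0 < q)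
    (Z : ℝ) (μ : Measure ℝ)
    (hμ : μ = (volume.restrict (Set.Ioo (-1 : ℝ) 1)).withDensity
      (fun x => ENNReal.ofReal ((1 - x) ^ (p - 1) * (1 + x) ^ (q - 1) / Z)))
    (hprob : IsProbabilityMeasure μ)
    (f : ℝ → ℝ) (hf : ContDiffOn ℝ 1 f (Set.Icc (-1 : ℝ) 1))
    (hmean : ∫ x, f x ∂μ = 0) :
    ∫ x, (f x) ^ 2 ∂μ ≤ (1 / (p + q)) * ∫ x, (1 - x ^ 2) * (deriv f x) ^ 2 ∂μ := by
  have hρ : 0 ≤ᵐ[volume.restrict (Ioo (-1 : ℝ) 1)] jacobiWeight p q :=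
    (ae_restrict_iff' measurableSet_Ioo).2 (.of_forall fun _ hx => (jacobiWeight_pos hx).le)
  have hZ : 0 < Z := pos_of_isProbabilityMeasure_withDensity_ofReal_div hρ (hμ ▸ hprob)
  have hμ_eq (g : ℝ → ℝ) : ∫ x, g x ∂μ = Z⁻¹ * ∫ x in (-1 : ℝ)..1, g x * jacobiWeight p q x := by
    rw [intervalIntegral.integral_of_le (by norm_num), integral_Ioc_eq_integral_Ioo, hμ]
    exact integral_withDensity_ofReal_div measurable_jacobiWeight hρ hZ.le g
  rw [hμ_eq, mul_eq_zero, inv_eq_zero, or_iff_right hZ.ne'] at hmean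
  have h := jacobi_poincare_of_contDiffOn hp hq hf hmean
  have hpq : 0 < p + q := by positivity
  rw [hμ_eq, hμ_eq]
  calc Z⁻¹ * ∫ x in (-1 : ℝ)..1, f x ^ 2 * jacobiWeight p q x
      ≤ Z⁻¹ * ((∫ x in (-1 : ℝ)..1, (1 - x ^ 2) * deriv f x ^ 2 * jacobiWeight p q x) / (p + q)) :=
        mul_le_mul_of_nonneg_left ((le_div_iff₀ hpq).2 (by linarith)) (by positivity)
    _ = _ := by ring
end

section
/- With 0 < a < 1/2 and a < b < 1-a and lambda_pm = (sqrt(b(1-a)) +/ - sqrt(a(1-b)))^2, the integral over [lambda_-, lambda_+] of sqrt((lambda_+ - x)(x - lambda_-)) / (x(1-x)) dx equals pi (1 - sqrt(lambda_- lambda_+) - sqrt((1-lambda_-)(1-lambda_+))) = 2 pi a. In particular, the measure with density sqrt((lambda_+ - x)(x - lambda_-)) / (2 pi a x (1-x)) on [lambda_-, lambda_+] is a probability measure. -/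
/-!
Splitting `1 / (x (1 - x)) = 1 / x + 1 / (1 - x)` and reflecting `x ↦ 1 - x` reduces the integral
to `∫_p^q √((q - x)(x - p)) / x dx`. The substitution `x = m + r sin θ`, with `m = (p + q) / 2`
and `r = (q - p) / 2`, turns this into `r² ∫_{-π/2}^{π/2} cos² θ / (m + r sin θ) dθ`, which comes
down to `∫_{-π/2}^{π/2} dθ / (A + B sin θ) = π / √(A² - B²)`, giving `π ((p + q) / 2 - √(pq))`.
For `p = λ₋`, `q = λ₊` one has `λ₋ λ₊ = (b - a)²` and `(1 - λ₋)(1 - λ₊) = (1 - a - b)²`, so the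
value `π (1 - √(λ₋ λ₊) - √((1 - λ₋)(1 - λ₊)))` equals `2 π a`.
-/

open Real intervalIntegral Set
open MeasureTheory (volume)

lemma sq_sub_sq_pos_of_abs_lt {A B : ℝ} (hB : |B| < A) : 0 < A ^ 2 - B ^ 2 := by
  nlinarith [abs_nonneg B, sq_abs B]

lemma add_mul_sin_pos {A B : ℝ} (hB : |B| < A) (θ : ℝ) : 0 < A + B * sin θ := by
  nlinarith [neg_one_le_sin θ, sin_le_one θ, neg_abs_le B, le_abs_self B]

lemma continuous_inv_add_mul_sin {A B : ℝ} (hB : |B| < A) :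
    Continuous fun θ => (A + B * sin θ)⁻¹ :=
  (continuous_const.add (continuous_const.mul continuous_sin)).inv₀
    fun θ => (add_mul_sin_pos hB θ).ne'

/-- An antiderivative found through the Weierstrass substitution `t = tan (θ / 2)`. -/
lemma hasDerivAt_arctan_tan_half {A B θ : ℝ} (hB : |B| < A) (hθ : θ ∈ Ioo (-π) π) :
    HasDerivAt (fun θ => 2 / √(A ^ 2 - B ^ 2) * arctan ((A * tan (θ / 2) + B) / √(A ^ 2 - B ^ 2)))
      (A + B * sin θ)⁻¹ θ := by
  set c := √(A ^ 2 - B ^ 2)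
  have hc : c ^ 2 = A ^ 2 - B ^ 2 := sq_sqrt (sq_sub_sq_pos_of_abs_lt hB).le
  have hcos : 0 < cos (θ / 2) := cos_pos_of_mem_Ioo ⟨by linarith [hθ.1], by linarith [hθ.2]⟩
  have htan : HasDerivAt (fun θ => tan (θ / 2)) (1 / cos (θ / 2) ^ 2 * (1 / 2)) θ := by
    exact (hasDerivAt_tan hcos.ne').comp θ ((hasDerivAt_id θ).div_const 2)
  refine (((hasDerivAt_arctan _).comp θ
    (((htan.const_mul A).add_const B).div_const c)).const_mul (2 / c)).congr_deriv ?_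
  have hsin : sin θ = 2 * sin (θ / 2) * cos (θ / 2) := by rw [← sin_two_mul]; ring_nf
  have hc0 : c ≠ 0 := (sqrt_pos.2 (sq_sub_sq_pos_of_abs_lt hB)).ne'
  have hpos := (add_mul_sin_pos hB θ).ne'
  rw [hsin] at hpos ⊢
  rw [tan_eq_sin_div_cos]
  field_simp
  rw [eq_div_iff (by convert hpos using 1; ring)]
  linear_combination -cos (θ / 2) ^ 2 * hc - A ^ 2 * sin_sq_add_cos_sq (θ / 2)

lemma integral_inv_add_mul_sin {A B : ℝ} (hB : |B| < A) :
    ∫ θ in -(π / 2)..π / 2, (A + B * sin θ)⁻¹ = π / √(A ^ 2 - B ^ 2) := by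
  have hc : 0 < √(A ^ 2 - B ^ 2) := sqrt_pos.2 (sq_sub_sq_pos_of_abs_lt hB)
  have hc2 : √(A ^ 2 - B ^ 2) ^ 2 = A ^ 2 - B ^ 2 := sq_sqrt (sq_sub_sq_pos_of_abs_lt hB).le
  rw [integral_eq_sub_of_hasDerivAt (fun θ hθ => hasDerivAt_arctan_tan_half hB ?_)
    ((continuous_inv_add_mul_sin hB).intervalIntegrable _ _)]
  · have hAB : 0 < A + B := by linarith [neg_abs_le B]
    -- `arctan u + arctan u⁻¹ = π / 2` for `u = (A + B) / c`, since `(A - B) / c = c / (A + B)`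
    have hrecip : (A * -1 + B) / √(A ^ 2 - B ^ 2) = -((A + B) / √(A ^ 2 - B ^ 2))⁻¹ := by
      field_simp
      linear_combination hc2
    rw [neg_div, tan_neg, show π / 2 / 2 = π / 4 by ring, tan_pi_div_four, mul_one, hrecip,
      arctan_neg, arctan_inv_of_pos (by positivity)]
    field_simp
    ring
  · rw [uIcc_of_le (by linarith [pi_pos])] at hθ
    exact ⟨by linarith [hθ.1, pi_pos], by linarith [hθ.2, pi_pos]⟩

lemma integral_cos_sq_div_add_mul_sin {A B : ℝ} (hB : |B| < A) (hB0 : B ≠ 0) :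
    ∫ θ in -(π / 2)..π / 2, cos θ ^ 2 / (A + B * sin θ) = π * (A - √(A ^ 2 - B ^ 2)) / B ^ 2 := by
  have hc2 : √(A ^ 2 - B ^ 2) ^ 2 = A ^ 2 - B ^ 2 := sq_sqrt (sq_sub_sq_pos_of_abs_lt hB).le
  have hsplit : ∀ θ, cos θ ^ 2 / (A + B * sin θ)
      = (A - B * sin θ) / B ^ 2 - (A ^ 2 - B ^ 2) / B ^ 2 * (A + B * sin θ)⁻¹ := by
    intro θ
    have := (add_mul_sin_pos hB θ).ne'
    field_simp
    linear_combination B ^ 2 * sin_sq_add_cos_sq θ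
  have hlin : ∫ θ in -(π / 2)..π / 2, (A - B * sin θ) / B ^ 2 = π * A / B ^ 2 := by
    rw [integral_div, integral_sub intervalIntegrable_const
      ((continuous_sin.intervalIntegrable _ _).const_mul _), integral_const_mul, integral_sin]
    simp
  simp only [hsplit]
  rw [integral_sub
    ((by fun_prop : Continuous fun θ => (A - B * sin θ) / B ^ 2).intervalIntegrable _ _)
    (((continuous_inv_add_mul_sin hB).intervalIntegrable _ _).const_mul _), integral_const_mul,
    integral_inv_add_mul_sin hB, hlin]
  have hc : 0 < √(A ^ 2 - B ^ 2) := sqrt_pos.2 (sq_sub_sq_pos_of_abs_lt hB)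
  field_simp
  linear_combination hc2

lemma integral_eq_integral_mul_cos_comp_sin {f : ℝ → ℝ} {p q : ℝ} (hpq : p ≤ q)
    (hf : ContinuousOn f (Icc p q)) :
    ∫ x in p..q, f x = ∫ θ in -(π / 2)..π / 2,
      f ((p + q) / 2 + (q - p) / 2 * sin θ) * ((q - p) / 2 * cos θ) := by
  have hderiv : ∀ θ ∈ uIcc (-(π / 2)) (π / 2),
      HasDerivAt (fun θ => (p + q) / 2 + (q - p) / 2 * sin θ) ((q - p) / 2 * cos θ) θ :=
    fun θ _ => ((hasDerivAt_sin θ).const_mul _).const_add _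
  have hmaps :
      (fun θ => (p + q) / 2 + (q - p) / 2 * sin θ) '' uIcc (-(π / 2)) (π / 2) ⊆ Icc p q := by
    rintro _ ⟨θ, -, rfl⟩
    constructor <;> nlinarith [neg_one_le_sin θ, sin_le_one θ]
  have := integral_comp_mul_deriv' hderiv (by fun_prop) (hf.mono hmaps)
  simp only [Function.comp_apply, sin_neg, sin_pi_div_two] at this
  rw [this]
  congr 1 <;> ring

lemma integral_sqrt_mul_sub_div_self {p q : ℝ} (hp : 0 < p) (hpq : p < q) :
    ∫ x in p..q, √((q - x) * (x - p)) / x = π * ((p + q) / 2 - √(p * q)) := by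
  have hf : ContinuousOn (fun x => √((q - x) * (x - p)) / x) (Icc p q) :=
    ContinuousOn.div (by fun_prop) (by fun_prop) fun x hx => (hp.trans_le hx.1).ne'
  rw [integral_eq_integral_mul_cos_comp_sin hpq.le hf]
  set m := (p + q) / 2
  set r := (q - p) / 2
  have hr : 0 < r := by positivity
  have hrm : |r| < m := by rw [abs_of_pos hr]; simp only [m, r]; linarith
  have hsubst : ∀ θ ∈ uIcc (-(π / 2)) (π / 2),
      √((q - (m + r * sin θ)) * (m + r * sin θ - p)) / (m + r * sin θ) * (r * cos θ)
        = r ^ 2 * (cos θ ^ 2 / (m + r * sin θ)) := by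
    intro θ hθ
    rw [uIcc_of_le (by linarith [pi_pos])] at hθ
    -- on `[-π/2, π/2]` the square root is `r cos θ`, as `cos θ ≥ 0` there
    have hsqrt : √((q - (m + r * sin θ)) * (m + r * sin θ - p)) = r * cos θ := by
      rw [← sqrt_sq (mul_nonneg hr.le (cos_nonneg_of_mem_Icc hθ))]
      congr 1
      linear_combination (-r ^ 2) * sin_sq_add_cos_sq θ
    rw [hsqrt]
    ring
  rw [integral_congr hsubst, integral_const_mul,
    integral_cos_sq_div_add_mul_sin hrm hr.ne', show m ^ 2 - r ^ 2 = p * q by ring]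
  field_simp

lemma integral_sqrt_mul_sub_div_one_sub {p q : ℝ} (hpq : p < q) (hq : q < 1) :
    ∫ x in p..q, √((q - x) * (x - p)) / (1 - x) = π * ((2 - p - q) / 2 - √((1 - p) * (1 - q))) := by
  have := integral_sqrt_mul_sub_div_self (sub_pos.2 hq) (sub_lt_sub_left hpq 1)
  simp only [← integral_comp_sub_left fun x => √((1 - p - x) * (x - (1 - q))) / x,
    show ∀ x, (1 - p - (1 - x)) * (1 - x - (1 - q)) = (q - x) * (x - p) by intro x; ring] at this
  rw [this, mul_comm (1 - q)]
  ring

lemma integral_sqrt_mul_sub_div_mul_one_sub {p q : ℝ} (hp : 0 < p) (hpq : p < q) (hq : q < 1) :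
    ∫ x in p..q, √((q - x) * (x - p)) / (x * (1 - x))
      = π * (1 - √(p * q) - √((1 - p) * (1 - q))) := by
  have hne : ∀ x ∈ uIcc p q, x ≠ 0 ∧ 1 - x ≠ 0 := by
    intro x hx
    rw [uIcc_of_le hpq.le] at hx
    exact ⟨(hp.trans_le hx.1).ne', (sub_pos.2 (hx.2.trans_lt hq)).ne'⟩
  have hsplit : ∀ x ∈ uIcc p q, √((q - x) * (x - p)) / (x * (1 - x))
      = √((q - x) * (x - p)) / x + √((q - x) * (x - p)) / (1 - x) := by
    intro x hx
    obtain ⟨hx0, hx1⟩ := hne x hx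
    field_simp
    ring
  have hint₁ : IntervalIntegrable (fun x => √((q - x) * (x - p)) / x) volume p q :=
    (ContinuousOn.div (by fun_prop) (by fun_prop) fun x hx => (hne x hx).1).intervalIntegrable
  have hint₂ : IntervalIntegrable (fun x => √((q - x) * (x - p)) / (1 - x)) volume p q :=
    (ContinuousOn.div (by fun_prop) (by fun_prop) fun x hx => (hne x hx).2).intervalIntegrable
  rw [integral_congr hsplit, integral_add hint₁ hint₂,
    integral_sqrt_mul_sub_div_self hp hpq, integral_sqrt_mul_sub_div_one_sub hpq hq]
  ring

section Edges

variable {a b X Y : ℝ} (hX : X ^ 2 = b * (1 - a)) (hY : Y ^ 2 = a * (1 - b))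
include hX hY

lemma sub_sq_mul_add_sq_eq : (X - Y) ^ 2 * (X + Y) ^ 2 = (b - a) ^ 2 := by
  linear_combination (X ^ 2 + b * (1 - a) - 2 * Y ^ 2) * hX
    + (Y ^ 2 + a * (1 - b) - 2 * b * (1 - a)) * hY

lemma one_sub_sub_sq_mul_one_sub_add_sq_eq :
    (1 - (X - Y) ^ 2) * (1 - (X + Y) ^ 2) = (1 - a - b) ^ 2 := by
  linear_combination (X ^ 2 + b * (1 - a) - 2 * Y ^ 2 - 2) * hX
    + (Y ^ 2 + a * (1 - b) - 2 * b * (1 - a) - 2) * hY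

lemma sub_sq_pos_and_lt_add_sq_and_add_sq_lt_one (hX0 : 0 ≤ X) (hY0 : 0 ≤ Y) (ha : 0 < a)
    (hab : a < b) (hab' : b < 1 - a) :
    0 < (X - Y) ^ 2 ∧ (X - Y) ^ 2 < (X + Y) ^ 2 ∧ (X + Y) ^ 2 < 1 := by
  have hprod := sub_sq_mul_add_sq_eq hX hY
  have hprod' := one_sub_sub_sq_mul_one_sub_add_sq_eq hX hY
  have hXY : 0 < X * Y := by
    have : 0 < (X * Y) ^ 2 := by rw [mul_pow, hX, hY]; apply mul_pos <;> nlinarith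
    nlinarith [mul_nonneg hX0 hY0]
  refine ⟨?_, by nlinarith, ?_⟩
  · have : 0 < (X - Y) ^ 2 * (X + Y) ^ 2 := by rw [hprod]; nlinarith
    exact pos_of_mul_pos_left this (sq_nonneg _)
  · -- `1 - λ₋` and `1 - λ₊` have positive product and positive sum
    have : 0 < (1 - (X - Y) ^ 2) * (1 - (X + Y) ^ 2) := by rw [hprod']; nlinarith
    have : 0 < (1 - (X - Y) ^ 2) + (1 - (X + Y) ^ 2) := by nlinarith
    nlinarith

end Edges

theorem jacobi_density_normalization_general (a b : ℝ) (ha : 0 < a)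
    (hab : a < b) (hab' : b < 1 - a) :
    (∫ x in ((Real.sqrt (b * (1 - a)) - Real.sqrt (a * (1 - b))) ^ 2)..
        ((Real.sqrt (b * (1 - a)) + Real.sqrt (a * (1 - b))) ^ 2),
        Real.sqrt (((Real.sqrt (b * (1 - a)) + Real.sqrt (a * (1 - b))) ^ 2 - x) *
            (x - (Real.sqrt (b * (1 - a)) - Real.sqrt (a * (1 - b))) ^ 2)) / (x * (1 - x)))
      = Real.pi * (1 -
          Real.sqrt ((Real.sqrt (b * (1 - a)) - Real.sqrt (a * (1 - b))) ^ 2 *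
            (Real.sqrt (b * (1 - a)) + Real.sqrt (a * (1 - b))) ^ 2) -
          Real.sqrt ((1 - (Real.sqrt (b * (1 - a)) - Real.sqrt (a * (1 - b))) ^ 2) *
            (1 - (Real.sqrt (b * (1 - a)) + Real.sqrt (a * (1 - b))) ^ 2))) ∧
    (∫ x in ((Real.sqrt (b * (1 - a)) - Real.sqrt (a * (1 - b))) ^ 2)..
        ((Real.sqrt (b * (1 - a)) + Real.sqrt (a * (1 - b))) ^ 2),
        Real.sqrt (((Real.sqrt (b * (1 - a)) + Real.sqrt (a * (1 - b))) ^ 2 - x) *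
            (x - (Real.sqrt (b * (1 - a)) - Real.sqrt (a * (1 - b))) ^ 2)) / (x * (1 - x)))
      = 2 * Real.pi * a ∧
    (∫ x in ((Real.sqrt (b * (1 - a)) - Real.sqrt (a * (1 - b))) ^ 2)..
        ((Real.sqrt (b * (1 - a)) + Real.sqrt (a * (1 - b))) ^ 2),
        Real.sqrt (((Real.sqrt (b * (1 - a)) + Real.sqrt (a * (1 - b))) ^ 2 - x) *
            (x - (Real.sqrt (b * (1 - a)) - Real.sqrt (a * (1 - b))) ^ 2)) /
          (2 * Real.pi * a * x * (1 - x)))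
      = 1 := by
  set X := √(b * (1 - a))
  set Y := √(a * (1 - b))
  have hX : X ^ 2 = b * (1 - a) := sq_sqrt (by nlinarith)
  have hY : Y ^ 2 = a * (1 - b) := sq_sqrt (by nlinarith)
  obtain ⟨hlo, hlo_hi, hhi⟩ :=
    sub_sq_pos_and_lt_add_sq_and_add_sq_lt_one hX hY (sqrt_nonneg _) (sqrt_nonneg _) ha hab hab'
  have hI := integral_sqrt_mul_sub_div_mul_one_sub hlo hlo_hi hhi
  have hI' : ∫ x in (X - Y) ^ 2..(X + Y) ^ 2,
      √(((X + Y) ^ 2 - x) * (x - (X - Y) ^ 2)) / (x * (1 - x)) = 2 * π * a := by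
    rw [hI, sub_sq_mul_add_sq_eq hX hY, one_sub_sub_sq_mul_one_sub_add_sq_eq hX hY,
      sqrt_sq (by linarith), sqrt_sq (by linarith)]
    ring
  refine ⟨hI, hI', ?_⟩
  have hdensity : ∀ x, √(((X + Y) ^ 2 - x) * (x - (X - Y) ^ 2)) / (2 * π * a * x * (1 - x))
      = √(((X + Y) ^ 2 - x) * (x - (X - Y) ^ 2)) / (x * (1 - x)) / (2 * π * a) := by
    intro x
    rw [div_div]
    ring
  simp only [hdensity]
  rw [integral_div, hI', div_self (by positivity)]

/-- With `0 < a < 1/2`, `a < b < 1-a` and `λ± = (√(b(1-a)) ± √(a(1-b)))²`: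
`∫_{λ₋}^{λ₊} √((λ₊-x)(x-λ₋))/(x(1-x)) dx = π(1 - √(λ₋λ₊) - √((1-λ₋)(1-λ₊))) = 2πa`;
in particular the measure with density `√((λ₊-x)(x-λ₋))/(2πa x(1-x))` on `[λ₋,λ₊]`
is a probability measure. -/
theorem jacobi_density_normalization (a b : ℝ) (ha : 0 < a) (ha' : a < 1 / 2)
    (hab : a < b) (hab' : b < 1 - a) :
    (∫ x in ((Real.sqrt (b * (1 - a)) - Real.sqrt (a * (1 - b))) ^ 2)..
        ((Real.sqrt (b * (1 - a)) + Real.sqrt (a * (1 - b))) ^ 2),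
        Real.sqrt (((Real.sqrt (b * (1 - a)) + Real.sqrt (a * (1 - b))) ^ 2 - x) *
            (x - (Real.sqrt (b * (1 - a)) - Real.sqrt (a * (1 - b))) ^ 2)) / (x * (1 - x)))
      = Real.pi * (1 -
          Real.sqrt ((Real.sqrt (b * (1 - a)) - Real.sqrt (a * (1 - b))) ^ 2 *
            (Real.sqrt (b * (1 - a)) + Real.sqrt (a * (1 - b))) ^ 2) -
          Real.sqrt ((1 - (Real.sqrt (b * (1 - a)) - Real.sqrt (a * (1 - b))) ^ 2) *
            (1 - (Real.sqrt (b * (1 - a)) + Real.sqrt (a * (1 - b))) ^ 2))) ∧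
    (∫ x in ((Real.sqrt (b * (1 - a)) - Real.sqrt (a * (1 - b))) ^ 2)..
        ((Real.sqrt (b * (1 - a)) + Real.sqrt (a * (1 - b))) ^ 2),
        Real.sqrt (((Real.sqrt (b * (1 - a)) + Real.sqrt (a * (1 - b))) ^ 2 - x) *
            (x - (Real.sqrt (b * (1 - a)) - Real.sqrt (a * (1 - b))) ^ 2)) / (x * (1 - x)))
      = 2 * Real.pi * a ∧
    (∫ x in ((Real.sqrt (b * (1 - a)) - Real.sqrt (a * (1 - b))) ^ 2)..
        ((Real.sqrt (b * (1 - a)) + Real.sqrt (a * (1 - b))) ^ 2),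
        Real.sqrt (((Real.sqrt (b * (1 - a)) + Real.sqrt (a * (1 - b))) ^ 2 - x) *
            (x - (Real.sqrt (b * (1 - a)) - Real.sqrt (a * (1 - b))) ^ 2)) /
          (2 * Real.pi * a * x * (1 - x)))
      = 1 :=
  jacobi_density_normalization_general a b ha hab hab'
end
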